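/- arXiv:1707.01630 — 6 statements merged into one kernel-verified Lean document; each statement's English description precedes it below -/
import Mathlib

section
/- Let the unit disc D = {x ∈ ℝ² : ‖x‖ ≤ 1} carry the uniform distribution. For 0 < a ≤ 1, let the chord at height b = √(1−a²) (the horizontal line x₂ = b joining (−a,b) to (a,b)) divide D into an upper cap and the remaining lower region, and let u₂ = 2a³ / (3(arcsin a − a√(1−a²))) and v₂ = −2a³ / (3(a√(1−a²) + arcsin a + 2 arccos a)) be the x₂-coordinates of the centroids of these two regions. Then the equation (u₂ + v₂)/2 = √(1−a²) holds only for a = 1; that is, the only horizontal chord that is the perpendicular bisector of the segment joining the centroids of the two pieces is the diameter. -/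
/-!
Parametrise the chord by its half-angle `θ = arcsin a`: it lies at height `cos θ`, the cap has
area `P = θ - sin θ cos θ`, and the centroid heights are `u₂ = 2 sin³θ / (3P)` and
`v₂ = -2 sin³θ / (3(π - P))`. For `0 < θ < π/2` we show `u₂ + v₂ < 2 cos θ`. For a low chord
(`cos θ ≥ 1/2`) this follows from `u₂ ≤ 1` and `v₂ < 0`. For a high chord the cap area is close
to `π/2`: `π/2 - P < cot θ + sin θ cos θ ≤ 2.1 cos θ`, and with `D = π/2 - P` we have
`u₂ + v₂ = 4 sin³θ D / (3(π²/4 - D²))`, which is less than `2 cos θ` already because `π > 3`.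
-/

open Real

noncomputable def capArea (θ : ℝ) : ℝ := θ - sin θ * cos θ

noncomputable def capCentroid (θ : ℝ) : ℝ := 2 * sin θ ^ 3 / (3 * capArea θ)

noncomputable def complementCentroid (θ : ℝ) : ℝ := -(2 * sin θ ^ 3) / (3 * (π - capArea θ))

section

variable {θ : ℝ}

theorem two_mul_sin_pow_three_le_three_mul_capArea (hθ : 0 ≤ θ) :
    2 * sin θ ^ 3 ≤ 3 * capArea θ := by
  let g : ℝ → ℝ := fun x ↦ 3 * (x - sin x * cos x) - 2 * sin x ^ 3
  -- `g' = 6 sin² (1 - cos) ≥ 0`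
  have hg_deriv (x : ℝ) : HasDerivAt g
      (3 * (1 - (cos x * cos x + sin x * -sin x)) - 2 * (3 * sin x ^ 2 * cos x)) x :=
    (((hasDerivAt_id x).sub ((hasDerivAt_sin x).mul (hasDerivAt_cos x))).const_mul 3).sub
      (((hasDerivAt_sin x).pow 3).const_mul 2)
  have hg_mono : Monotone g := by
    refine monotone_of_deriv_nonneg (fun x ↦ (hg_deriv x).differentiableAt) fun x ↦ ?_
    rw [(hg_deriv x).deriv]
    nlinarith [sin_sq_add_cos_sq x, cos_le_one x, sq_nonneg (sin x)]
  have := hg_mono hθ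
  simp only [g, sin_zero, cos_zero] at this
  rw [capArea]
  linarith

theorem capArea_pos (h0 : 0 < θ) (hπ : θ < π) : 0 < capArea θ := by
  have := two_mul_sin_pow_three_le_three_mul_capArea h0.le
  have := pow_pos (sin_pos_of_pos_of_lt_pi h0 hπ) 3
  linarith

theorem capArea_lt_pi_div_two (h0 : 0 ≤ θ) (h1 : θ < π / 2) : capArea θ < π / 2 := by
  have : 0 ≤ sin θ * cos θ :=
    mul_nonneg (sin_nonneg_of_nonneg_of_le_pi h0 (by linarith [pi_pos]))
      (cos_nonneg_of_mem_Icc ⟨by linarith [pi_pos], h1.le⟩)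
  rw [capArea]
  linarith

theorem capCentroid_le_one (h0 : 0 < θ) (hπ : θ < π) : capCentroid θ ≤ 1 :=
  div_le_one_of_le₀ (two_mul_sin_pow_three_le_three_mul_capArea h0.le)
    (by linarith [capArea_pos h0 hπ])

theorem complementCentroid_neg (h0 : 0 < θ) (h1 : θ < π / 2) : complementCentroid θ < 0 := by
  have := capArea_lt_pi_div_two h0.le h1
  have := sin_pos_of_pos_of_lt_pi h0 (by linarith)
  exact div_neg_of_neg_of_pos (by simp only [neg_neg_iff_pos]; positivity) (by linarith)

theorem pi_div_two_sub_lt_cos_div_sin (h0 : 0 < θ) (h1 : θ < π / 2) :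
    π / 2 - θ < cos θ / sin θ := by
  have := lt_tan (x := π / 2 - θ) (by linarith) (by linarith)
  rwa [tan_pi_div_two_sub, tan_eq_sin_div_cos, inv_div] at this

theorem pi_div_two_sub_capArea_lt (h0 : 0 < θ) (h1 : θ < π / 2) (hcos : cos θ < 1 / 2) :
    π / 2 - capArea θ < 21 / 10 * cos θ := by
  have hsin := sin_pos_of_pos_of_lt_pi h0 (by linarith)
  have hcos0 : 0 < cos θ := cos_pos_of_mem_Ioo ⟨by linarith, h1⟩
  -- `1 / sin θ + sin θ ≤ 21/10` as soon as `sin θ > √3/2`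
  have hsin_add_inv : 1 + sin θ ^ 2 ≤ 21 / 10 * sin θ := by
    nlinarith [sin_sq_add_cos_sq θ]
  have := pi_div_two_sub_lt_cos_div_sin h0 h1
  have : cos θ / sin θ + sin θ * cos θ ≤ 21 / 10 * cos θ := by
    rw [div_add' _ _ _ hsin.ne', div_le_iff₀ hsin]
    nlinarith
  rw [capArea]
  linarith

theorem capCentroid_add_complementCentroid_lt_of_cos_lt_half (h0 : 0 < θ) (h1 : θ < π / 2)
    (hcos : cos θ < 1 / 2) : capCentroid θ + complementCentroid θ < 2 * cos θ := by
  obtain ⟨D, hP⟩ : ∃ D, capArea θ = π / 2 - D := ⟨π / 2 - capArea θ, by ring⟩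
  have hD0 : 0 < D := by linarith [capArea_lt_pi_div_two h0.le h1]
  have hDb : D < 21 / 10 * cos θ := by linarith [pi_div_two_sub_capArea_lt h0 h1 hcos]
  have hsin := sin_pos_of_pos_of_lt_pi h0 (by linarith)
  have hcos0 : 0 < cos θ := cos_pos_of_mem_Ioo ⟨by linarith, h1⟩
  have hπD : 0 < π / 2 - D := by linarith [capArea_pos h0 (by linarith)]
  have hsum : capCentroid θ + complementCentroid θ =
      4 * sin θ ^ 3 * D / (3 * (π / 2 - D) * (π / 2 + D)) := by
    have : 0 < π / 2 + D := by linarith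
    rw [capCentroid, complementCentroid, hP, show π - (π / 2 - D) = π / 2 + D by ring,
      div_add_div _ _ (by positivity) (by positivity), div_eq_div_iff (by positivity) (by positivity)]
    ring
  have hsin3 : sin θ ^ 3 * D ≤ (1 - cos θ ^ 2) * D :=
    mul_le_mul_of_nonneg_right (by nlinarith [sin_sq_add_cos_sq θ, sin_le_one θ]) hD0.le
  have hD_sq : cos θ * D ^ 2 ≤ cos θ * (21 / 10 * cos θ) ^ 2 :=
    mul_le_mul_of_nonneg_left (pow_le_pow_left₀ hD0.le hDb.le 2) hcos0.le
  have hπ_sq : cos θ * 9 < cos θ * π ^ 2 :=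
    mul_lt_mul_of_pos_left (by nlinarith [pi_gt_three]) hcos0
  rw [hsum, div_lt_iff₀ (by positivity)]
  nlinarith [mul_lt_mul_of_pos_left hDb (by nlinarith : (0 : ℝ) < 1 - cos θ ^ 2),
    mul_pos hcos0 (by nlinarith : (0 : ℝ) < 1 / 4 - cos θ ^ 2)]

theorem capCentroid_add_complementCentroid_lt (h0 : 0 < θ) (h1 : θ < π / 2) :
    capCentroid θ + complementCentroid θ < 2 * cos θ := by
  rcases lt_or_ge (cos θ) (1 / 2) with hcos | hcos
  · exact capCentroid_add_complementCentroid_lt_of_cos_lt_half h0 h1 hcos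
  · linarith [capCentroid_le_one h0 (by linarith), complementCentroid_neg h0 h1]

end

/-- For the unit disc cut by a horizontal chord at height √(1−a²), the chord is the
perpendicular bisector of the segment joining the centroids of the two pieces
(i.e. the midpoint of the two centroids lies on the chord) only when a = 1,
that is, only when the chord is a diameter. -/
theorem disc_two_means_chord_is_diameter (a : ℝ) (ha : 0 < a) (ha1 : a ≤ 1) :
    ((2 * a ^ 3 / (3 * (arcsin a - a * Real.sqrt (1 - a ^ 2)))
        + (-(2 * a ^ 3) / (3 * (a * Real.sqrt (1 - a ^ 2) + arcsin a + 2 * arccos a)))) / 2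
      = Real.sqrt (1 - a ^ 2)) ↔ a = 1 := by
  refine ⟨fun h ↦ ?_, fun h ↦ ?_⟩
  · by_contra hne
    have hlt := capCentroid_add_complementCentroid_lt (arcsin_pos.2 ha)
      (arcsin_lt_pi_div_two.2 (lt_of_le_of_ne ha1 hne))
    have hsum : π - capArea (arcsin a) = a * √(1 - a ^ 2) + arcsin a + 2 * arccos a := by
      rw [capArea, sin_arcsin (by linarith) ha1, cos_arcsin, arccos_eq_pi_div_two_sub_arcsin]
      ring
    rw [capCentroid, complementCentroid, hsum, capArea, sin_arcsin (by linarith) ha1,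
      cos_arcsin] at hlt
    linarith
  · subst h
    norm_num [arcsin_one, arccos_one]
    ring
end

section
/- Let T be the triangle with vertices O(0,0), A(1,0), B(1,1). For 0 < α < 1, cut T by the line through C(1−α, 0) and D(1, α) (the line x₂ = x₁ − 1 + α), producing the small isosceles triangle ACD with centroid P = ((3−α)/3, α/3) and the trapezoid OCDB with centroid Q = ((−α² + 2α + 2)/(3α+3), (α² + α + 1)/(3α+3)). Then the line CD is the perpendicular bisector of segment PQ if and only if α = (√5 − 1)/2, the reciprocal of the Golden ratio. -/
/-!
Both centroids lie on the line `x₁ + x₂ = 1`, which is perpendicular to `CD`; so the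
perpendicularity half of the bisector condition holds for every `α`, and the remaining half,
that the midpoint of `PQ` lies on `CD`, clears denominators to `α² + α − 1 = 0`, whose
positive root is `(√5 − 1)/2`.
-/

section CoordinateSumOne

lemma sub_mul_one_add_sub_mul_one_eq_zero {P Q : ℝ × ℝ} (hP : P.1 + P.2 = 1)
    (hQ : Q.1 + Q.2 = 1) : (Q.1 - P.1) * 1 + (Q.2 - P.2) * 1 = 0 := by
  linarith

lemma midpoint_mem_line_iff {P Q : ℝ × ℝ} (hP : P.1 + P.2 = 1) (hQ : Q.1 + Q.2 = 1)
    (α : ℝ) : (P.2 + Q.2) / 2 = (P.1 + Q.1) / 2 - 1 + α ↔ P.1 + Q.1 = 2 - α := by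
  constructor <;> intro h <;> linarith

end CoordinateSumOne

section Centroids

variable {α : ℝ}

lemma trapezoid_centroid_coord_sum (hα : α ≠ -1) :
    (-α ^ 2 + 2 * α + 2) / (3 * α + 3) + (α ^ 2 + α + 1) / (3 * α + 3) = 1 := by
  have : α + 1 ≠ 0 := fun h ↦ hα (by linarith)
  field_simp
  ring

lemma centroid_fst_add_eq_iff (hα : α ≠ -1) :
    (3 - α) / 3 + (-α ^ 2 + 2 * α + 2) / (3 * α + 3) = 2 - α ↔ α ^ 2 + α - 1 = 0 := by
  have : α + 1 ≠ 0 := fun h ↦ hα (by linarith)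
  rw [← sub_eq_zero, show (3 - α) / 3 + (-α ^ 2 + 2 * α + 2) / (3 * α + 3) - (2 - α)
      = (α ^ 2 + α - 1) / (3 * (α + 1)) by field_simp; ring]
  exact div_eq_zero_iff.trans (or_iff_left (mul_ne_zero three_ne_zero this))

end Centroids

lemma sq_add_self_sub_one_eq_zero_iff {x : ℝ} (hx : 0 < x) :
    x ^ 2 + x - 1 = 0 ↔ x = (√5 - 1) / 2 := by
  have hdiscrim : discrim 1 1 (-1 : ℝ) = √5 * √5 := by
    rw [discrim, Real.mul_self_sqrt (by norm_num)]; norm_num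
  rw [show x ^ 2 + x - 1 = 1 * (x * x) + 1 * x + -1 by ring,
    quadratic_eq_zero_iff one_ne_zero hdiscrim, or_iff_left]
  · ring_nf
  · intro h
    have : 0 ≤ √5 := Real.sqrt_nonneg 5
    linarith

theorem golden_ratio_cvt_general (α : ℝ) (h0 : 0 < α)
    (P Q : ℝ × ℝ)
    (hP : P = ((3 - α) / 3, α / 3))
    (hQ : Q = ((-α ^ 2 + 2 * α + 2) / (3 * α + 3), (α ^ 2 + α + 1) / (3 * α + 3))) :
    (((P.2 + Q.2) / 2 = (P.1 + Q.1) / 2 - 1 + α) ∧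
        ((Q.1 - P.1) * 1 + (Q.2 - P.2) * 1 = 0)) ↔
      α = (Real.sqrt 5 - 1) / 2 := by
  have hα : α ≠ -1 := by linarith
  have hPsum : P.1 + P.2 = 1 := by rw [hP]; ring
  have hQsum : Q.1 + Q.2 = 1 := by rw [hQ]; exact trapezoid_centroid_coord_sum hα
  rw [and_iff_left (sub_mul_one_add_sub_mul_one_eq_zero hPsum hQsum),
    midpoint_mem_line_iff hPsum hQsum, hP, hQ]
  exact (centroid_fst_add_eq_iff hα).trans (sq_add_self_sub_one_eq_zero_iff h0)

/-- For the triangle O(0,0), A(1,0), B(1,1) cut by the line CD : x₂ = x₁ − 1 + α,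
the line CD is the perpendicular bisector of the segment joining the centroid
P = ((3−α)/3, α/3) of the small triangle and the centroid
Q = ((−α²+2α+2)/(3α+3), (α²+α+1)/(3α+3)) of the trapezoid if and only if
α = (√5 − 1)/2, the reciprocal of the Golden ratio. -/
theorem golden_ratio_cvt (α : ℝ) (h0 : 0 < α) (h1 : α < 1)
    (P Q : ℝ × ℝ)
    (hP : P = ((3 - α) / 3, α / 3))
    (hQ : Q = ((-α ^ 2 + 2 * α + 2) / (3 * α + 3), (α ^ 2 + α + 1) / (3 * α + 3))) :
    (((P.2 + Q.2) / 2 = (P.1 + Q.1) / 2 - 1 + α) ∧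
        ((Q.1 - P.1) * 1 + (Q.2 - P.2) * 1 = 0)) ↔
      α = (Real.sqrt 5 - 1) / 2 :=
  golden_ratio_cvt_general α h0 P Q hP hQ
end

section
/- Let P be the uniform distribution on the region R bounded by the rhombus with vertices O(0,0), A(1,0), B(1+1/√2, 1/√2), C(1/√2, 1/√2). The set α = { ((1/3)(1 + 1/√2), 1/(3√2)), ((1/3)(√2 + 2), √2/3) } satisfies: ∫ min_{a∈α} ‖x − a‖² dP(x) = (2√2 − 1)/(18√2) ≈ 0.0718274, and the Voronoi boundary of the two points is the diagonal AC of the rhombus. -/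
/-!
The difference of the squared distances from a point to the two centroids is an affine function
vanishing on the diagonal `AC : x + (√2 - 1) y = 1`, namely a positive multiple of
`1 - (√2 - 1) y - x`. Hence the Voronoi boundary is `AC`, and on every horizontal slice of the
rhombus the minimum switches exactly once, at `AC`, from the distance to the lower centroid to the
distance to the upper one. Integrating the two quadratics piecewise leaves a quadratic in `y`.
-/

open Set intervalIntegral

lemma integral_sq_sub_add_const (a b c d : ℝ) :
    ∫ x in a..b, ((x - c) ^ 2 + d) = ((b - c) ^ 3 - (a - c) ^ 3) / 3 + d * (b - a) := by
  rw [integral_add (f := fun x => (x - c) ^ 2) (by apply Continuous.intervalIntegrable; fun_prop)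
      intervalIntegrable_const,
    integral_comp_sub_right (· ^ 2), integral_pow, integral_const, smul_eq_mul]
  ring

lemma integral_quadratic (c₀ c₁ c₂ b : ℝ) :
    ∫ y in (0 : ℝ)..b, (c₀ + c₁ * y + c₂ * y ^ 2)
      = c₀ * b + c₁ * b ^ 2 / 2 + c₂ * b ^ 3 / 3 := by
  have hi {f : ℝ → ℝ} (hf : Continuous f) : IntervalIntegrable f MeasureTheory.volume 0 b :=
    hf.intervalIntegrable 0 b
  rw [integral_add (hi (by fun_prop)) (hi (by fun_prop)),
    integral_add (hi (by fun_prop)) (hi (by fun_prop)), integral_const_mul, integral_const_mul,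
    integral_pow, integral_id, integral_const, smul_eq_mul]
  ring

lemma integral_min_of_crossing {f g : ℝ → ℝ} {a m b : ℝ} (ham : a ≤ m) (hmb : m ≤ b)
    (hf : Continuous f) (hg : Continuous g)
    (hfg : ∀ x ∈ Icc a m, f x ≤ g x) (hgf : ∀ x ∈ Icc m b, g x ≤ f x) :
    ∫ x in a..b, min (f x) (g x) = (∫ x in a..m, f x) + ∫ x in m..b, g x := by
  have hmin : Continuous fun x => min (f x) (g x) := hf.min hg
  rw [← integral_add_adjacent_intervals (hmin.intervalIntegrable a m)
    (hmin.intervalIntegrable m b)]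
  congr 1
  · refine integral_congr fun x hx => min_eq_left (hfg x ?_)
    rwa [uIcc_of_le ham] at hx
  · refine integral_congr fun x hx => min_eq_right (hgf x ?_)
    rwa [uIcc_of_le hmb] at hx

lemma centroid_OAC_eq :
    (((1 : ℝ) / 3 * (1 + 1 / √2), 1 / (3 * √2)) : ℝ × ℝ) = ((2 + √2) / 6, √2 / 6) := by
  have hs0 : √2 ≠ 0 := by positivity
  ext <;> field_simp <;> linear_combination -3 * Real.sq_sqrt zero_le_two

lemma centroid_ABC_eq :
    (((1 : ℝ) / 3 * (√2 + 2), √2 / 3) : ℝ × ℝ) = ((2 + √2) / 3, √2 / 3) := by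
  ext <;> ring

lemma sqDist_sub_sqDist_centroids (x y : ℝ) :
    ((x - (2 + √2) / 3) ^ 2 + (y - √2 / 3) ^ 2) - ((x - (2 + √2) / 6) ^ 2 + (y - √2 / 6) ^ 2)
      = √2 * (√2 + 1) / 3 * (1 - (√2 - 1) * y - x) := by
  linear_combination (x / 3 + √2 * y / 3 - 1 / 6) * Real.sq_sqrt zero_le_two

lemma eqOn_integral_min_sqDist_centroids :
    EqOn (fun y => ∫ x in y..(y + 1), min ((x - (2 + √2) / 6) ^ 2 + (y - √2 / 6) ^ 2)
        ((x - (2 + √2) / 3) ^ 2 + (y - √2 / 3) ^ 2))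
      (fun y => (2 / 9 - √2 / 18) + (1 / 3 - 2 * √2 / 3) * y + (4 / 3 - √2 / 3) * y ^ 2)
      (uIcc 0 (1 / √2)) := by
  intro y hy
  rw [uIcc_of_le (by positivity)] at hy
  obtain ⟨hy₀, hy₁⟩ := hy
  have hsy : √2 * y ≤ 1 := by rwa [le_div_iff₀' (by positivity)] at hy₁
  have hgap := fun x => sqDist_sub_sqDist_centroids x y
  have hc : 0 ≤ √2 * (√2 + 1) / 3 := by positivity
  dsimp only
  rw [integral_min_of_crossing (m := 1 - (√2 - 1) * y) (by linarith)
      (by linarith [mul_nonneg (Real.sqrt_nonneg 2) hy₀]) (by fun_prop) (by fun_prop)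
      (fun x hx => sub_nonneg.mp <| hgap x ▸ mul_nonneg hc (by linarith [hx.2]))
      (fun x hx => sub_nonpos.mp <| hgap x ▸
        mul_nonpos_of_nonneg_of_nonpos hc (by linarith [hx.1])),
    integral_sq_sub_add_const, integral_sq_sub_add_const]
  linear_combination (1 / 18 - y ^ 2 / 3 + √2 * y / 6 + √2 * y ^ 2 / 6) * Real.sq_sqrt zero_le_two

/-- For the uniform distribution (density √2) on the rhombus with vertices
O(0,0), A(1,0), B(1+1/√2, 1/√2), C(1/√2, 1/√2), the two-point set consisting of
p = ((1/3)(1+1/√2), 1/(3√2)) and q = ((1/3)(√2+2), √2/3) has distortion error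
(2√2−1)/(18√2), and the Voronoi boundary of p and q is the diagonal AC of the
rhombus, i.e. the line x₂ = −(√2+1)(x₁−1). -/
theorem rhombus_two_means (p q : ℝ × ℝ)
    (hp : p = ((1 / 3) * (1 + 1 / Real.sqrt 2), 1 / (3 * Real.sqrt 2)))
    (hq : q = ((1 / 3) * (Real.sqrt 2 + 2), Real.sqrt 2 / 3)) :
    Real.sqrt 2 * (∫ y in (0:ℝ)..(1 / Real.sqrt 2), ∫ x in y..(y + 1),
        min ((x - p.1) ^ 2 + (y - p.2) ^ 2) ((x - q.1) ^ 2 + (y - q.2) ^ 2))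
      = (2 * Real.sqrt 2 - 1) / (18 * Real.sqrt 2) ∧
    (∀ v : ℝ × ℝ, (v.1 - p.1) ^ 2 + (v.2 - p.2) ^ 2
        = (v.1 - q.1) ^ 2 + (v.2 - q.2) ^ 2 ↔
          v.2 = -(Real.sqrt 2 + 1) * (v.1 - 1)) := by
  subst hp hq
  rw [centroid_OAC_eq, centroid_ABC_eq]
  dsimp only
  have hs : √2 ^ 2 = 2 := Real.sq_sqrt zero_le_two
  refine ⟨?_, fun v => ?_⟩
  · have hb : 1 / √2 = √2 / 2 := by field_simp; linear_combination -hs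
    rw [integral_congr eqOn_integral_min_sqDist_centroids, integral_quadratic, hb,
      eq_div_iff (by positivity)]
    linear_combination (-1 / 2 + √2 - √2 ^ 2 / 4 - √2 ^ 3 / 2 - √2 ^ 4 / 4) * hs
  · rw [eq_comm, ← sub_eq_zero, sqDist_sub_sqDist_centroids, mul_eq_zero,
      or_iff_right (by positivity)]
    constructor <;> intro h
    · linear_combination -(√2 + 1) * h - v.2 * hs
    · linear_combination -(√2 - 1) * h + (v.1 - 1) * hs
end

section
/- For the uniform distribution P on the 4×4 grid S = {(i,j) : 1 ≤ i,j ≤ 4} (mass 1/16 each), the set α₂ = {(5/2, 3/2), (5/2, 7/2)} has distortion error Σ_{s∈S} min_{a∈α₂} ‖s−a‖²/16 = 3/2, each point of α₂ is the mean of the eight grid points in its Voronoi half-plane, and no two-point set achieves a smaller distortion error than 3/2. -/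
/-!
For a cluster `C`, the sum of squared distances to any point is at least the within-cluster
sum of squares `Σ ‖s‖² - ‖Σ s‖² / #C`, so a two-point quantizer `{p, q}` costs at least the
within-cluster sum of squares of the partition of the grid into the points nearer to `p` and
the rest. Since the total sum of squares of the grid is `40`, it remains to bound the
between-cluster part by `16`; with `c = (5/2, 5/2)` this is `‖Σ_{s ∈ A} (s - c)‖² ≤ #A · (16 - #A)`
for every subset `A` of the grid, which is checked by evaluating all `2 ^ 16` subsets in the
kernel.
-/

open Finset

def List.allSubsetSums {α M : Type*} [Add M] (p : M → Bool) (f : α → M) : List α → M → Bool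
  | [], acc => p acc
  | x :: l, acc => allSubsetSums p f l (acc + f x) && allSubsetSums p f l acc

theorem List.allSubsetSums_spec {α M : Type*} [DecidableEq α] [AddCommMonoid M]
    {p : M → Bool} {f : α → M} {l : List α} (hl : l.Nodup) {acc : M}
    (h : l.allSubsetSums p f acc = true) {A : Finset α} (hA : A ⊆ l.toFinset) :
    p (acc + ∑ x ∈ A, f x) = true := by
  induction l generalizing acc A with
  | nil => simp_all [allSubsetSums]
  | cons x l ih =>
    rw [nodup_cons] at hl
    rw [allSubsetSums, Bool.and_eq_true] at h
    rw [toFinset_cons] at hA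
    by_cases hx : x ∈ A
    · rw [← add_sum_erase A f hx, ← add_assoc]
      exact ih hl.2 h.1 (subset_insert_iff.mp hA)
    · exact ih hl.2 h.2 ((subset_insert_iff_of_notMem hx).mp hA)

def sqDist (x y : ℝ × ℝ) : ℝ := (x.1 - y.1) ^ 2 + (x.2 - y.2) ^ 2

section Scatter

variable {ι : Type*}

theorem sum_sq_sub_sq_sum_div_card_le (s : Finset ι) (x : ι → ℝ) (w : ℝ) :
    ∑ i ∈ s, x i ^ 2 - (∑ i ∈ s, x i) ^ 2 / #s ≤ ∑ i ∈ s, (x i - w) ^ 2 := by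
  rcases s.eq_empty_or_nonempty with rfl | hs
  · simp
  have hn : (0 : ℝ) < #s := by exact_mod_cast hs.card_pos
  have expand : ∑ i ∈ s, (x i - w) ^ 2
      = ∑ i ∈ s, x i ^ 2 - 2 * w * ∑ i ∈ s, x i + #s * w ^ 2 := by
    simp only [sub_sq, sum_add_distrib, sum_sub_distrib, ← sum_mul, ← mul_sum, sum_const,
      nsmul_eq_mul]
    ring
  have complete_square : (#s * w - ∑ i ∈ s, x i) ^ 2 / #s
      = #s * w ^ 2 - 2 * w * ∑ i ∈ s, x i + (∑ i ∈ s, x i) ^ 2 / #s := by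
    field_simp
    ring
  have : 0 ≤ (#s * w - ∑ i ∈ s, x i) ^ 2 / #s := by positivity
  linarith

/-- The within-cluster sum of squares of the points `v i`, `i ∈ C`. -/
noncomputable def scatter (v : ι → ℝ × ℝ) (C : Finset ι) : ℝ :=
  ∑ i ∈ C, ((v i).1 ^ 2 + (v i).2 ^ 2)
    - ((∑ i ∈ C, (v i).1) ^ 2 + (∑ i ∈ C, (v i).2) ^ 2) / #C

theorem scatter_le_sum_sqDist (v : ι → ℝ × ℝ) (C : Finset ι) (w : ℝ × ℝ) :
    scatter v C ≤ ∑ i ∈ C, sqDist (v i) w := by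
  have h₁ := sum_sq_sub_sq_sum_div_card_le C (fun i => (v i).1) w.1
  have h₂ := sum_sq_sub_sq_sum_div_card_le C (fun i => (v i).2) w.2
  simp only [scatter, sqDist, sum_add_distrib, add_div] at *
  linarith

theorem exists_scatter_add_scatter_sdiff_le_sum_min [DecidableEq ι] (v : ι → ℝ × ℝ)
    (G : Finset ι) (p q : ℝ × ℝ) :
    ∃ A ⊆ G, scatter v A + scatter v (G \ A)
      ≤ ∑ i ∈ G, min (sqDist (v i) p) (sqDist (v i) q) := by
  let nearP i := sqDist (v i) p ≤ sqDist (v i) q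
  refine ⟨G.filter nearP, filter_subset _ _, ?_⟩
  rw [← filter_not, ← sum_filter_add_sum_filter_not G nearP]
  gcongr ?_ + ?_
  · refine (scatter_le_sum_sqDist v _ p).trans_eq (sum_congr rfl fun i hi => ?_)
    exact (min_eq_left (mem_filter.mp hi).2).symm
  · refine (scatter_le_sum_sqDist v _ q).trans_eq (sum_congr rfl fun i hi => ?_)
    exact (min_eq_right (not_le.mp (mem_filter.mp hi).2).le).symm

end Scatter

-- Per coordinate, `X² / n + (40 - X)² / (16 - n) = 100 + 4 (2X - 5n)² / (n (16 - n))`.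
theorem sq_div_add_sq_div_sixteen_sub_le {n sx sy : ℝ} (hn : 0 ≤ n) (hn' : n ≤ 16)
    (h : (2 * sx - 5 * n) ^ 2 + (2 * sy - 5 * n) ^ 2 ≤ 4 * n * (16 - n)) :
    (sx ^ 2 + sy ^ 2) / n + ((40 - sx) ^ 2 + (40 - sy) ^ 2) / (16 - n) ≤ 216 := by
  rcases hn.eq_or_lt with rfl | hn
  · obtain ⟨rfl, rfl⟩ : sx = 0 ∧ sy = 0 := by constructor <;> nlinarith
    norm_num
  rcases hn'.eq_or_lt with rfl | hn'
  · obtain ⟨rfl, rfl⟩ : sx = 40 ∧ sy = 40 := by constructor <;> nlinarith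
    norm_num
  rw [div_add_div _ _ hn.ne' (sub_pos.mpr hn').ne', div_le_iff₀ (by nlinarith)]
  nlinarith

def grid : Finset (ℕ × ℕ) := Icc 1 4 ×ˢ Icc 1 4

def gridPoint (s : ℕ × ℕ) : ℝ × ℝ := (s.1, s.2)

-- The predicate is `(2 sx - 5 n) ^ 2 + (2 sy - 5 n) ^ 2 ≤ 4 n (16 - n)` on `(n, sx, sy)`,
-- rearranged so that no subtraction occurs in `ℕ`.
theorem allSubsetSums_grid :
    (List.range' 1 4 ×ˢ List.range' 1 4).allSubsetSums
      (fun t : ℕ × ℕ × ℕ =>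
        decide (2 * (t.2.1 ^ 2 + t.2.2 ^ 2) + 27 * t.1 ^ 2 ≤ 32 * t.1 + 10 * t.1 * (t.2.1 + t.2.2)))
      (fun s => (1, s.1, s.2)) 0 = true := by
  decide +kernel

theorem subset_grid_sum_le {A : Finset (ℕ × ℕ)} (hA : A ⊆ grid) :
    2 * ((∑ s ∈ A, s.1) ^ 2 + (∑ s ∈ A, s.2) ^ 2) + 27 * #A ^ 2
      ≤ 32 * #A + 10 * #A * (∑ s ∈ A, s.1 + ∑ s ∈ A, s.2) := by
  have hgrid : (List.range' 1 4 ×ˢ List.range' 1 4).toFinset = grid := by decide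
  have := List.allSubsetSums_spec (by decide) allSubsetSums_grid (hgrid ▸ hA)
  simp only [zero_add, decide_eq_true_eq, Prod.snd_sum, Prod.fst_sum] at this
  rwa [card_eq_sum_ones]

theorem le_scatter_add_scatter_grid_sdiff {A : Finset (ℕ × ℕ)} (hA : A ⊆ grid) :
    24 ≤ scatter gridPoint A + scatter gridPoint (grid \ A) := by
  have hcard : (#(grid \ A) : ℝ) = 16 - #A := by
    have := card_sdiff_add_card_eq_card hA
    rw [show #grid = 16 from rfl] at this
    rw [eq_sub_iff_add_eq]
    exact_mod_cast this
  have hx : ∑ s ∈ grid, (gridPoint s).1 = 40 := by simp only [gridPoint]; norm_cast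
  have hy : ∑ s ∈ grid, (gridPoint s).2 = 40 := by simp only [gridPoint]; norm_cast
  have hsq : ∑ s ∈ grid, ((gridPoint s).1 ^ 2 + (gridPoint s).2 ^ 2) = 240 := by
    simp only [gridPoint]; norm_cast
  have hsums : (2 * ∑ s ∈ A, (gridPoint s).1 - 5 * #A) ^ 2
      + (2 * ∑ s ∈ A, (gridPoint s).2 - 5 * #A) ^ 2 ≤ 4 * #A * (16 - #A) := by
    have hnat : (2 * ((∑ s ∈ A, s.1 : ℕ) ^ 2 + (∑ s ∈ A, s.2 : ℕ) ^ 2) + 27 * #A ^ 2 : ℝ)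
        ≤ 32 * #A + 10 * #A * ((∑ s ∈ A, s.1 : ℕ) + (∑ s ∈ A, s.2 : ℕ)) := by
      exact_mod_cast subset_grid_sum_le hA
    push_cast at hnat
    simp only [gridPoint]
    linear_combination 2 * hnat
  have := sq_div_add_sq_div_sixteen_sub_le (Nat.cast_nonneg _)
    (by exact_mod_cast card_le_card hA) hsums
  simp only [scatter, sum_sdiff_eq_sub hA, hx, hy, hsq, hcard]
  linarith

/-- For the uniform distribution on the 4×4 grid, α₂ = {(5/2,3/2), (5/2,7/2)} has
distortion error 3/2, each of its points is the mean of the eight grid points in its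
Voronoi half-plane, and no two-point set has smaller distortion error. -/
theorem grid_two_means
    (d : ℝ × ℝ → ℝ × ℝ → ℝ) (hd : d = fun s a => (s.1 - a.1) ^ 2 + (s.2 - a.2) ^ 2) :
    (∑ i ∈ Finset.Icc (1:ℕ) 4, ∑ j ∈ Finset.Icc (1:ℕ) 4,
        min (d ((i : ℝ), (j : ℝ)) (5 / 2, 3 / 2)) (d ((i : ℝ), (j : ℝ)) (5 / 2, 7 / 2)))
      / 16 = 3 / 2 ∧
    ((1 / 8 : ℝ) * (∑ i ∈ Finset.Icc (1:ℕ) 4, ∑ j ∈ Finset.Icc (1:ℕ) 2, (i : ℝ)),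
      (1 / 8 : ℝ) * (∑ i ∈ Finset.Icc (1:ℕ) 4, ∑ j ∈ Finset.Icc (1:ℕ) 2, (j : ℝ)))
        = ((5 / 2 : ℝ), (3 / 2 : ℝ)) ∧
    ((1 / 8 : ℝ) * (∑ i ∈ Finset.Icc (1:ℕ) 4, ∑ j ∈ Finset.Icc (3:ℕ) 4, (i : ℝ)),
      (1 / 8 : ℝ) * (∑ i ∈ Finset.Icc (1:ℕ) 4, ∑ j ∈ Finset.Icc (3:ℕ) 4, (j : ℝ)))
        = ((5 / 2 : ℝ), (7 / 2 : ℝ)) ∧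
    (∀ p q : ℝ × ℝ,
      (3 / 2 : ℝ) ≤ (∑ i ∈ Finset.Icc (1:ℕ) 4, ∑ j ∈ Finset.Icc (1:ℕ) 4,
        min (d ((i : ℝ), (j : ℝ)) p) (d ((i : ℝ), (j : ℝ)) q)) / 16) := by
  obtain rfl : d = sqDist := hd
  refine ⟨by norm_num [sum_Icc_succ_top, sqDist, min_def], by norm_num [sum_Icc_succ_top],
    by norm_num [sum_Icc_succ_top], fun p q => ?_⟩
  obtain ⟨A, hA, hle⟩ := exists_scatter_add_scatter_sdiff_le_sum_min gridPoint grid p q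
  have := le_scatter_add_scatter_grid_sdiff hA
  simp only [grid, gridPoint, sum_product] at hle this
  rw [le_div_iff₀ (by norm_num)]
  linarith
end

section
/- For the uniform distribution P on the 4×4 grid S = {(i,j) : 1 ≤ i,j ≤ 4} (mass 1/16 each), the set α₄ = {(3/2,3/2), (3/2,7/2), (7/2,3/2), (7/2,7/2)} has distortion error 1/2, each point is the mean of the four grid points in its quadrant (its Voronoi region), and V₄(P) = 1/2, i.e., no set of at most 4 points achieves a smaller distortion error. -/
/-!
If a cluster `T` of integer points is served by one centre `a`, then
`∑ s ∈ T, ‖s - a‖² ≥ #T - 2`, with equality for a 2×2 block and its centre. Splitting the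
16 grid points into the Voronoi cells of at most four centres therefore gives a total error of
at least `16 - 2 * 4 = 8`, which is what `α₄` attains.

The cluster bound comes from the pointwise inequality `x² + y² - 1 ≥ -2 h(x) h(y)` for the hat
function `h(x) = (1 - |x|)₊` (on `|x|, |y| ≤ 1` the difference is `(|x| + |y| - 1)²`), since the
integer translates of `h` sum to at most `1` in each coordinate.
-/

open Finset

noncomputable def hat (x : ℝ) : ℝ := max 0 (1 - |x|)

lemma hat_nonneg (x : ℝ) : 0 ≤ hat x := le_max_left _ _

lemma hat_eq_zero_of_one_le_abs {x : ℝ} (hx : 1 ≤ |x|) : hat x = 0 :=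
  max_eq_left (by linarith)

lemma sum_hat_int_sub_le_one (S : Finset ℤ) (t : ℝ) : ∑ i ∈ S, hat (i - t) ≤ 1 := by
  set n := ⌊t⌋
  have hn : (n : ℝ) ≤ t := Int.floor_le t
  have hn' : t < n + 1 := Int.lt_floor_add_one t
  have hvanish : ∀ i ∈ S, hat (i - t) ≠ 0 → i ∈ ({n, n + 1} : Finset ℤ) := by
    intro i _ hi
    contrapose! hi
    apply hat_eq_zero_of_one_le_abs
    simp only [mem_insert, mem_singleton, not_or] at hi
    rcases lt_or_gt_of_ne hi.1 with h | h
    · have : (i : ℝ) ≤ n - 1 := by exact_mod_cast Int.le_sub_one_of_lt h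
      rw [abs_of_neg (by linarith)]; linarith
    · have : (n : ℝ) + 2 ≤ i := by exact_mod_cast (show n + 2 ≤ i by omega)
      rw [abs_of_pos (by linarith)]; linarith
  calc ∑ i ∈ S, hat (i - t)
      = ∑ i ∈ S.filter (· ∈ ({n, n + 1} : Finset ℤ)), hat (i - t) :=
        (sum_filter_of_ne hvanish).symm
    _ ≤ ∑ i ∈ ({n, n + 1} : Finset ℤ), hat (i - t) :=
        sum_le_sum_of_subset_of_nonneg (fun i hi => (mem_filter.1 hi).2) fun _ _ _ => hat_nonneg _
    _ = (1 - (t - n)) + (1 - (n + 1 - t)) := by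
        rw [sum_pair (by omega), hat, hat, abs_of_nonpos (by linarith),
          abs_of_pos (by push_cast; linarith)]
        push_cast
        rw [max_eq_right (by linarith), max_eq_right (by linarith)]
        ring
    _ = 1 := by ring

lemma neg_two_mul_hat_mul_hat_le (x y : ℝ) : -2 * (hat x * hat y) ≤ x ^ 2 + y ^ 2 - 1 := by
  by_cases h : 1 ≤ |x| ∨ 1 ≤ |y|
  · rcases h with h | h <;> simp only [hat_eq_zero_of_one_le_abs h, mul_zero, zero_mul] <;>
      nlinarith [sq_abs x, sq_abs y]
  · rw [not_or, not_le, not_le] at h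
    rw [hat, hat, max_eq_right (by linarith), max_eq_right (by linarith), ← sq_abs x, ← sq_abs y]
    nlinarith [sq_nonneg (|x| + |y| - 1)]

lemma card_sub_two_le_sum_sq_dist (T : Finset (ℤ × ℤ)) (a : ℝ × ℝ) :
    (T.card : ℝ) - 2 ≤ ∑ s ∈ T, (((s.1 : ℝ) - a.1) ^ 2 + ((s.2 : ℝ) - a.2) ^ 2) := by
  have hprod : ∑ s ∈ T, hat (s.1 - a.1) * hat (s.2 - a.2) ≤ 1 :=
    calc ∑ s ∈ T, hat (s.1 - a.1) * hat (s.2 - a.2)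
        ≤ ∑ s ∈ T.image Prod.fst ×ˢ T.image Prod.snd, hat (s.1 - a.1) * hat (s.2 - a.2) :=
          sum_le_sum_of_subset_of_nonneg
            (fun s hs => mem_product.2 ⟨mem_image_of_mem _ hs, mem_image_of_mem _ hs⟩)
            fun _ _ _ => mul_nonneg (hat_nonneg _) (hat_nonneg _)
      _ = (∑ i ∈ T.image Prod.fst, hat (i - a.1)) * ∑ j ∈ T.image Prod.snd, hat (j - a.2) := by
          rw [sum_mul_sum, sum_product]
      _ ≤ 1 := mul_le_one₀ (sum_hat_int_sub_le_one _ _)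
          (sum_nonneg fun _ _ => hat_nonneg _) (sum_hat_int_sub_le_one _ _)
  have hpoint := fun s : ℤ × ℤ => neg_two_mul_hat_mul_hat_le (s.1 - a.1) (s.2 - a.2)
  have := sum_le_sum fun s (_ : s ∈ T) => hpoint s
  rw [sum_sub_distrib, ← mul_sum, sum_const, nsmul_one] at this
  linarith

lemma card_sub_mul_card_le_sum_inf' {ι α : Type*} [DecidableEq α] (G : Finset ι) (β : Finset α)
    (hβ : β.Nonempty) (f : ι → α → ℝ) (c : ℝ)
    (h : ∀ a ∈ β, ∀ T ⊆ G, (T.card : ℝ) - c ≤ ∑ p ∈ T, f p a) :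
    (G.card : ℝ) - c * β.card ≤ ∑ p ∈ G, β.inf' hβ (f p) := by
  choose g hgβ hg using fun p => exists_mem_eq_inf' hβ (f p)
  have hmaps : ∀ p ∈ G, g p ∈ β := fun p _ => hgβ p
  calc (G.card : ℝ) - c * β.card
      = ∑ a ∈ β, (((G.filter (g · = a)).card : ℝ) - c) := by
        rw [sum_sub_distrib, card_eq_sum_card_fiberwise hmaps, sum_const, nsmul_eq_mul]
        push_cast; ring
    _ ≤ ∑ a ∈ β, ∑ p ∈ G.filter (g · = a), f p a :=
        sum_le_sum fun a ha => h a ha _ (filter_subset _ _)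
    _ = ∑ a ∈ β, ∑ p ∈ G.filter (g · = a), f p (g p) :=
        sum_congr rfl fun a _ => sum_congr rfl fun p hp => by rw [(mem_filter.1 hp).2]
    _ = ∑ p ∈ G, β.inf' hβ (f p) := by
        rw [sum_fiberwise_of_maps_to hmaps]; exact sum_congr rfl fun p _ => (hg p).symm

/-- For the uniform distribution on the 4×4 grid, the four-point set
α₄ = {(3/2,3/2), (3/2,7/2), (7/2,3/2), (7/2,7/2)} has distortion error 1/2,
each of its points is the mean of the four grid points in its quadrant, and no set
of at most four points achieves a smaller distortion error, i.e. V₄(P) = 1/2. -/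
theorem grid_four_means
    (d : ℝ × ℝ → ℝ × ℝ → ℝ) (hd : d = fun s a => (s.1 - a.1) ^ 2 + (s.2 - a.2) ^ 2) :
    (∑ i ∈ Finset.Icc (1:ℕ) 4, ∑ j ∈ Finset.Icc (1:ℕ) 4,
        min (min (d ((i : ℝ), (j : ℝ)) (3 / 2, 3 / 2)) (d ((i : ℝ), (j : ℝ)) (3 / 2, 7 / 2)))
          (min (d ((i : ℝ), (j : ℝ)) (7 / 2, 3 / 2)) (d ((i : ℝ), (j : ℝ)) (7 / 2, 7 / 2))))
      / 16 = 1 / 2 ∧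
    (∀ a b : ℕ, (a = 1 ∨ a = 3) → (b = 1 ∨ b = 3) →
      ((1 / 4 : ℝ) * (∑ i ∈ Finset.Icc a (a + 1), ∑ j ∈ Finset.Icc b (b + 1), (i : ℝ)),
        (1 / 4 : ℝ) * (∑ i ∈ Finset.Icc a (a + 1), ∑ j ∈ Finset.Icc b (b + 1), (j : ℝ)))
          = (((a : ℝ) + 1 / 2), ((b : ℝ) + 1 / 2))) ∧
    (∀ (β : Finset (ℝ × ℝ)) (hβ : β.Nonempty), β.card ≤ 4 →
      (1 / 2 : ℝ) ≤ (∑ i ∈ Finset.Icc (1:ℕ) 4, ∑ j ∈ Finset.Icc (1:ℕ) 4,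
        β.inf' hβ (fun a => d ((i : ℝ), (j : ℝ)) a)) / 16) := by
  subst hd
  refine ⟨?_, ?_, ?_⟩
  · norm_num [show Finset.Icc (1:ℕ) 4 = {1, 2, 3, 4} by rfl, min_def]
  · rintro a b (rfl | rfl) (rfl | rfl) <;>
      norm_num [show Finset.Icc (1:ℕ) 2 = {1, 2} by rfl, show Finset.Icc (3:ℕ) 4 = {3, 4} by rfl,
        Prod.ext_iff]
  · intro β hβ hcard
    have hcluster : ∀ a ∈ β, ∀ T ⊆ Icc 1 4 ×ˢ Icc 1 4, (T.card : ℝ) - 2 ≤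
        ∑ p ∈ T, ((((p.1 : ℕ) : ℝ) - a.1) ^ 2 + (((p.2 : ℕ) : ℝ) - a.2) ^ 2) := by
      intro a _ T _
      have hinj : Function.Injective fun p : ℕ × ℕ => ((p.1 : ℤ), (p.2 : ℤ)) :=
        fun p q h => by simpa [Prod.ext_iff] using h
      simpa [card_image_of_injective _ hinj, sum_image fun p _ q _ h => hinj h] using
        card_sub_two_le_sum_sq_dist (T.image fun p => ((p.1 : ℤ), (p.2 : ℤ))) a
    have hcells := card_sub_mul_card_le_sum_inf' _ β hβ _ 2 hcluster
    rw [sum_product] at hcells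
    have h16 : (Icc (1:ℕ) 4 ×ˢ Icc (1:ℕ) 4).card = 16 := rfl
    have h4 : (β.card : ℝ) ≤ 4 := by exact_mod_cast hcard
    rw [h16, Nat.cast_ofNat] at hcells
    dsimp only at hcells ⊢
    linarith
end

section
/- For the uniform distribution P on the 4×4 grid S = {(i,j) : 1 ≤ i,j ≤ 4}, the set α₃ = {(7/5, 9/5), (18/5, 9/5), (5/2, 11/3)} has distortion error Σ_{s∈S} min_{a∈α₃} ‖s−a‖²/16 = 89/96 ≈ 0.927083, and each point of α₃ is the mean of the grid points in its Voronoi region, the Voronoi diagram of α₃ partitioning S into clusters of sizes 5, 5, 6. -/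
/-- For the uniform distribution on the 4×4 grid, the three-point set
α₃ = {(7/5,9/5), (18/5,9/5), (5/2,11/3)} has distortion error 89/96, and each of its
points is the mean of the grid points in its Voronoi region (clusters of sizes
5, 5, 6). -/
theorem grid_three_means
    (d : ℝ × ℝ → ℝ × ℝ → ℝ) (hd : d = fun s a => (s.1 - a.1) ^ 2 + (s.2 - a.2) ^ 2)
    (a₁ a₂ a₃ : ℝ × ℝ)
    (h₁ : a₁ = (7 / 5, 9 / 5)) (h₂ : a₂ = (18 / 5, 9 / 5)) (h₃ : a₃ = (5 / 2, 11 / 3))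
    (C₁ C₂ C₃ : List (ℝ × ℝ))
    (hC₁ : C₁ = [(1, 1), (1, 2), (2, 1), (2, 2), (1, 3)])
    (hC₂ : C₂ = [(3, 1), (3, 2), (4, 1), (4, 2), (4, 3)])
    (hC₃ : C₃ = [(2, 3), (3, 3), (2, 4), (3, 4), (1, 4), (4, 4)]) :
    (∑ i ∈ Finset.Icc (1:ℕ) 4, ∑ j ∈ Finset.Icc (1:ℕ) 4,
        min (min (d ((i : ℝ), (j : ℝ)) a₁) (d ((i : ℝ), (j : ℝ)) a₂))
          (d ((i : ℝ), (j : ℝ)) a₃)) / 16 = 89 / 96 ∧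
    ((1 / 5 : ℝ) * (C₁.map Prod.fst).sum, (1 / 5 : ℝ) * (C₁.map Prod.snd).sum) = a₁ ∧
    ((1 / 5 : ℝ) * (C₂.map Prod.fst).sum, (1 / 5 : ℝ) * (C₂.map Prod.snd).sum) = a₂ ∧
    ((1 / 6 : ℝ) * (C₃.map Prod.fst).sum, (1 / 6 : ℝ) * (C₃.map Prod.snd).sum) = a₃ ∧
    (∀ s ∈ C₁, d s a₁ ≤ d s a₂ ∧ d s a₁ ≤ d s a₃) ∧
    (∀ s ∈ C₂, d s a₂ ≤ d s a₁ ∧ d s a₂ ≤ d s a₃) ∧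
    (∀ s ∈ C₃, d s a₃ ≤ d s a₁ ∧ d s a₃ ≤ d s a₂) := by
  subst hd h₁ h₂ h₃ hC₁ hC₂ hC₃
  refine ⟨?_, ?_, ?_, ?_, ?_, ?_, ?_⟩
  · show ((Finset.Icc (1:ℕ) 4).sum _) / 16 = 89 / 96
    rw [show Finset.Icc (1:ℕ) 4 = {1, 2, 3, 4} by rfl]
    simp only [Finset.sum_insert, Finset.mem_insert, Finset.sum_singleton]
    norm_num [min_def]
  · norm_num
  · norm_num
  · norm_num
  · intro s hs; fin_cases hs <;> constructor <;> norm_num [min_def]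
  · intro s hs; fin_cases hs <;> constructor <;> norm_num [min_def]
  · intro s hs; fin_cases hs <;> constructor <;> norm_num [min_def]
end
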